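/- arXiv:2512.09124 — 6 statements merged into one kernel-verified Lean document; each statement's English description precedes it below -/
import Mathlib

section
/- Let I be a finite set of agents with credence functions P_i on measurable subsets A_i ⊆ A, pairwise compatible, and let X be their overlap simplicial complex. Define g : X_1 → ℝ by g(i,j) = log(P_i(A_i ∩ A_j)/P_j(A_i ∩ A_j)). Then g is a cocycle: for every (i,j,k) ∈ X_2, g(j,k) − g(i,k) + g(i,j) = 0. -/
/-!
Compatibility on `A_a ∩ A_b` makes the two conditionals agree on the triple overlap
`T = A_i ∩ A_j ∩ A_k ⊆ A_a ∩ A_b`, i.e. `P_a(T) / P_a(A_a ∩ A_b) = P_b(T) / P_b(A_a ∩ A_b)`.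
Hence every edge value is `g(a,b) = log P_a(T) - log P_b(T)`, a coboundary on the triangle,
and the alternating sum telescopes to zero.
-/

open MeasureTheory ProbabilityTheory Finset

theorem toReal_measure_div_eq_of_cond_eq {A : Type*} [MeasurableSpace A] {μ ν : Measure A}
    [IsFiniteMeasure μ] [IsFiniteMeasure ν] {E T : Set A} (hE : MeasurableSet E)
    (hTE : T ⊆ E) (hμT : 0 < μ T) (hνT : 0 < ν T) (h : μ[|E] = ν[|E]) :
    (μ E).toReal / (ν E).toReal = (μ T).toReal / (ν T).toReal := by
  have hcond : (μ E)⁻¹ * μ T = (ν E)⁻¹ * ν T := by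
    simpa only [cond_apply hE, Set.inter_eq_self_of_subset_right hTE] using
      congrArg (fun m : Measure A => m T) h
  have hcond_real : (μ E).toReal⁻¹ * (μ T).toReal = (ν E).toReal⁻¹ * (ν T).toReal := by
    simpa only [ENNReal.toReal_mul, ENNReal.toReal_inv] using congrArg ENNReal.toReal hcond
  have hμE : 0 < (μ E).toReal :=
    ENNReal.toReal_pos (hμT.trans_le (measure_mono hTE)).ne' (measure_ne_top _ _)
  have hνE : 0 < (ν E).toReal :=
    ENNReal.toReal_pos (hνT.trans_le (measure_mono hTE)).ne' (measure_ne_top _ _)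
  have hνT' : 0 < (ν T).toReal := ENNReal.toReal_pos hνT.ne' (measure_ne_top _ _)
  rw [div_eq_div_iff hνE.ne' hνT'.ne']
  field_simp at hcond_real
  linarith

theorem overlap_cochain_is_cocycle_general {I A : Type*} [LinearOrder I]
    [MeasurableSpace A]
    (P : I → Measure A) [∀ i, IsProbabilityMeasure (P i)]
    (As : I → Set A) (hAs : ∀ i, MeasurableSet (As i))
    (hcompat : ∀ i j : I, 0 < P i (As i ∩ As j) → 0 < P j (As i ∩ As j) →
      (P i)[|As i ∩ As j] = (P j)[|As i ∩ As j])
    (g : I → I → ℝ)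
    (hg : ∀ i j : I, 0 < P i (As i ∩ As j) → 0 < P j (As i ∩ As j) →
      g i j = Real.log ((P i (As i ∩ As j)).toReal / (P j (As i ∩ As j)).toReal)) :
    ∀ i j k : I, i < j → j < k →
      (∀ l ∈ ({i, j, k} : Finset I), 0 < P l (As i ∩ As j ∩ As k)) →
      g j k - g i k + g i j = 0 := by
  intro i j k _ _ hpos
  set T := As i ∩ As j ∩ As k
  have hsub : ∀ a ∈ ({i, j, k} : Finset I), T ⊆ As a := by
    simp only [Finset.mem_insert, Finset.mem_singleton]
    rintro a (rfl | rfl | rfl) x ⟨⟨_, _⟩, _⟩ <;> assumption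
  have edge : ∀ a ∈ ({i, j, k} : Finset I), ∀ b ∈ ({i, j, k} : Finset I),
      g a b = Real.log (P a T).toReal - Real.log (P b T).toReal := by
    intro a ha b hb
    have hTab : T ⊆ As a ∩ As b := Set.subset_inter (hsub a ha) (hsub b hb)
    have hpa := (hpos a ha).trans_le (measure_mono hTab)
    have hpb := (hpos b hb).trans_le (measure_mono hTab)
    rw [hg a b hpa hpb, toReal_measure_div_eq_of_cond_eq ((hAs a).inter (hAs b)) hTab
      (hpos a ha) (hpos b hb) (hcompat a b hpa hpb),
      Real.log_div (ENNReal.toReal_pos (hpos a ha).ne' (measure_ne_top _ _)).ne'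
        (ENNReal.toReal_pos (hpos b hb).ne' (measure_ne_top _ _)).ne']
  rw [edge j (by simp) k (by simp), edge i (by simp) k (by simp), edge i (by simp) j (by simp)]
  ring

/-- For pairwise compatible agents, the edge function
`g(i,j) = log (P_i(A_i ∩ A_j) / P_j(A_i ∩ A_j))` on the overlap simplicial complex is a
cocycle: `g(j,k) − g(i,k) + g(i,j) = 0` on every ordered triangle of the overlap complex. -/
theorem overlap_cochain_is_cocycle {I A : Type*} [Fintype I] [LinearOrder I]
    [MeasurableSpace A]
    (P : I → Measure A) [∀ i, IsProbabilityMeasure (P i)]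
    (As : I → Set A) (hAs : ∀ i, MeasurableSet (As i))
    (hconc : ∀ i, P i (As i) = 1)
    (hcompat : ∀ i j : I, 0 < P i (As i ∩ As j) → 0 < P j (As i ∩ As j) →
      (P i)[|As i ∩ As j] = (P j)[|As i ∩ As j])
    (g : I → I → ℝ)
    (hg : ∀ i j : I, 0 < P i (As i ∩ As j) → 0 < P j (As i ∩ As j) →
      g i j = Real.log ((P i (As i ∩ As j)).toReal / (P j (As i ∩ As j)).toReal)) :
    ∀ i j k : I, i < j → j < k →
      (∀ l ∈ ({i, j, k} : Finset I), 0 < P l (As i ∩ As j ∩ As k)) →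
      g j k - g i k + g i j = 0 :=
  overlap_cochain_is_cocycle_general P As hAs hcompat g hg
end

section
/- Let X be a finite simplicial complex on vertex set I with H^1(X,ℝ) ≠ 0. Then there exist a finite measurable space A, measurable subsets A_i ⊆ A for i ∈ I, and probability measures P_i on A_i, such that the agents (P_i) are pairwise compatible, their overlap simplicial complex is exactly X, but no ur-prior exists. -/
open MeasureTheory ProbabilityTheory Finset

/-!
Extend the cocycle `g` antisymmetrically to `G` and let agent `i` live on the simplices
containing `i`, with weight `exp (G i (max x))` on the simplex `x`. On a simplex containing
`i` and `j` the cocycle identity gives `G i (max x) - G j (max x) = G i j`, so the weights of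
`i` and `j` are proportional there and their conditionals agree. An ur-prior `Q` would satisfy
`Q {x} = c i * exp (G i (max x))` for every `x ∋ i`; evaluating at the edge `{i, j}` gives
`c j = c i * exp (g i j)`, so `g` would be the coboundary of `log c`.
-/

section Cochains

variable {I : Type*} [LinearOrder I]

def IsOneCocycle (X : Set (Finset I)) (g : I → I → ℝ) : Prop :=
  ∀ i j k : I, i < j → j < k → ({i, j, k} : Finset I) ∈ X → g j k - g i k + g i j = 0

def IsOneCoboundary (X : Set (Finset I)) (g : I → I → ℝ) : Prop :=
  ∃ f : I → ℝ, ∀ i j : I, i < j → ({i, j} : Finset I) ∈ X → g i j = f j - f i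

def antisymmExt (g : I → I → ℝ) (i j : I) : ℝ :=
  if i < j then g i j else if j < i then -g j i else 0

variable {g : I → I → ℝ}

@[simp]
lemma antisymmExt_self (i : I) : antisymmExt g i i = 0 := by
  simp [antisymmExt]

lemma antisymmExt_of_lt {i j : I} (h : i < j) : antisymmExt g i j = g i j := by
  simp [antisymmExt, h]

lemma antisymmExt_of_gt {i j : I} (h : j < i) : antisymmExt g i j = -g j i := by
  simp [antisymmExt, h, h.not_gt]

lemma IsOneCocycle.antisymmExt_sub {X : Set (Finset I)} (hg : IsOneCocycle X g) {i j k : I}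
    (hik : i ≤ k) (hjk : j ≤ k) (hX : ({i, j, k} : Finset I) ∈ X) :
    antisymmExt g i k - antisymmExt g j k = antisymmExt g i j := by
  rcases hik.lt_or_eq with hik | rfl
  · rcases hjk.lt_or_eq with hjk | rfl
    · rcases lt_trichotomy i j with hij | rfl | hij
      · have := hg i j k hij hjk hX
        rw [antisymmExt_of_lt hik, antisymmExt_of_lt hjk, antisymmExt_of_lt hij]
        linarith
      · simp
      · have := hg j i k hij hik (by rwa [Finset.insert_comm])
        rw [antisymmExt_of_lt hik, antisymmExt_of_lt hjk, antisymmExt_of_gt hij]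
        linarith
    · simp
  · rcases hjk.lt_or_eq with hji | rfl
    · simp [antisymmExt_of_lt hji, antisymmExt_of_gt hji]
    · simp

lemma isOneCoboundary_of_eq_mul_exp {X : Set (Finset I)} (c : I → ℝ) (hc : ∀ i, 0 < c i)
    (h : ∀ i j : I, i < j → ({i, j} : Finset I) ∈ X → c j = c i * Real.exp (g i j)) :
    IsOneCoboundary X g := by
  refine ⟨fun i => Real.log (c i), fun i j hij hX => ?_⟩
  show g i j = Real.log (c j) - Real.log (c i)
  rw [h i j hij hX, Real.log_mul (hc i).ne' (Real.exp_pos _).ne', Real.log_exp]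
  ring

end Cochains

section Conditioning

variable {α : Type*} [MeasurableSpace α] [Countable α] [MeasurableSingletonClass α]
  {μ ν : Measure α} {s : Set α}

lemma cond_eq_cond_of_singleton_eq_mul {c : ENNReal} (hc₀ : c ≠ 0) (hc : c ≠ ⊤)
    (h : ∀ x ∈ s, μ {x} = c * ν {x}) : μ[|s] = ν[|s] := by
  have hrestrict : μ.restrict s = c • ν.restrict s := by
    refine Measure.ext_iff_singleton.2 fun x => ?_
    rw [Measure.smul_apply, Measure.restrict_apply (measurableSet_singleton x),
      Measure.restrict_apply (measurableSet_singleton x), smul_eq_mul]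
    by_cases hx : x ∈ s
    · rw [Set.singleton_inter_of_mem hx, h x hx]
    · simp [Set.singleton_inter_eq_empty.2 hx]
  have hμs : μ s = c * ν s := by
    rw [← Measure.restrict_apply_univ, hrestrict, Measure.smul_apply,
      Measure.restrict_apply_univ, smul_eq_mul]
  rw [ProbabilityTheory.cond, ProbabilityTheory.cond, hrestrict, hμs, smul_smul, ENNReal.mul_inv (.inl hc₀) (.inl hc),
    mul_right_comm, ENNReal.inv_mul_cancel hc₀ hc, one_mul]

lemma measure_singleton_eq_of_cond_eq (ρ : Measure α) [IsFiniteMeasure ρ] (hρ : ρ[|s] = μ[|s])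
    {x : α} (hx : x ∈ s) : ρ {x} = ρ s * (μ s)⁻¹ * μ {x} := by
  have hs : MeasurableSet s := (Set.to_countable s).measurableSet
  have hsx : s ∩ {x} = {x} := Set.inter_eq_right.2 (Set.singleton_subset_iff.2 hx)
  rw [← hsx, ← cond_mul_eq_inter hs, hρ, cond_apply hs]
  ring

end Conditioning

section Agents

/-- A point `a : A` stands for the simplex `σ a`; this is the paper's `A_i`. -/
def vertexStar {I A : Type*} (σ : A → Finset I) (i : I) : Set A := {a | i ∈ σ a}

variable {I A : Type*} [LinearOrder I] [Fintype A] [MeasurableSpace A]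
  [MeasurableSingletonClass A] {X : Set (Finset I)} {g : I → I → ℝ} {σ : A → Finset I}
  {top : A → I}

noncomputable def agentWeight (g : I → I → ℝ) (top : A → I) (i : I) : Measure A :=
  ∑ a, (Real.exp (antisymmExt g i (top a))).toNNReal • Measure.dirac a

instance (i : I) : IsFiniteMeasure (agentWeight g top i) := by
  unfold agentWeight; infer_instance

noncomputable def agent (g : I → I → ℝ) (σ : A → Finset I) (top : A → I) (i : I) : Measure A :=
  (agentWeight g top i)[|vertexStar σ i]

lemma agentWeight_singleton (i : I) (a : A) :
    agentWeight g top i {a} = ENNReal.ofReal (Real.exp (antisymmExt g i (top a))) := by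
  rw [agentWeight, Measure.finsetSum_apply, Finset.sum_eq_single_of_mem a (Finset.mem_univ a)]
  · simp [ENNReal.ofReal]
  · intro b _ hb
    simp [hb]

lemma agentWeight_singleton_ne_zero (i : I) (a : A) : agentWeight g top i {a} ≠ 0 := by
  simp [agentWeight_singleton, Real.exp_pos]

lemma agentWeight_vertexStar_ne_zero {i : I} (hi : (vertexStar σ i).Nonempty) :
    agentWeight g top i (vertexStar σ i) ≠ 0 := by
  obtain ⟨a, ha⟩ := hi
  exact fun h => agentWeight_singleton_ne_zero i a
    (measure_mono_null (Set.singleton_subset_iff.2 ha) h)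

lemma agent_isProbabilityMeasure {i : I} (hi : (vertexStar σ i).Nonempty) :
    IsProbabilityMeasure (agent g σ top i) :=
  cond_isProbabilityMeasure (agentWeight_vertexStar_ne_zero hi)

lemma agent_vertexStar {i : I} (hi : (vertexStar σ i).Nonempty) :
    agent g σ top i (vertexStar σ i) = 1 :=
  cond_apply_self (agentWeight_vertexStar_ne_zero hi) (measure_ne_top _ _)

lemma agent_singleton_pos {i : I} {a : A} (ha : a ∈ vertexStar σ i) :
    0 < agent g σ top i {a} := by
  refine cond_pos_of_inter_ne_zero (Set.toFinite _).measurableSet ?_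
  rw [Set.inter_eq_right.2 (Set.singleton_subset_iff.2 ha)]
  exact agentWeight_singleton_ne_zero i a

lemma agentWeight_singleton_eq_mul (hg : IsOneCocycle X g) {a : A}
    (htop : IsGreatest (σ a : Set I) (top a)) {i j : I} (hi : i ∈ σ a) (hj : j ∈ σ a)
    (hX : ({i, j, top a} : Finset I) ∈ X) :
    agentWeight g top i {a} =
      ENNReal.ofReal (Real.exp (antisymmExt g i j)) * agentWeight g top j {a} := by
  rw [agentWeight_singleton, agentWeight_singleton, ← ENNReal.ofReal_mul (Real.exp_pos _).le,
    ← Real.exp_add, ← hg.antisymmExt_sub (htop.2 hi) (htop.2 hj) hX, sub_add_cancel]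

lemma agent_cond_inter_eq (hσ : Set.range σ = X)
    (hX_down : ∀ s ∈ X, ∀ t : Finset I, t.Nonempty → t ⊆ s → t ∈ X) (hg : IsOneCocycle X g)
    (htop : ∀ a, IsGreatest (σ a : Set I) (top a)) (i j : I) :
    (agent g σ top i)[|vertexStar σ i ∩ vertexStar σ j] =
      (agent g σ top j)[|vertexStar σ i ∩ vertexStar σ j] := by
  have hmeas : ∀ s : Set A, MeasurableSet s := fun s => (Set.toFinite s).measurableSet
  rw [agent, agent, cond_cond_eq_cond_inter (hmeas _) (hmeas _),
    cond_cond_eq_cond_inter (hmeas _) (hmeas _), Set.inter_eq_right.2 Set.inter_subset_left,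
    Set.inter_eq_right.2 Set.inter_subset_right]
  refine cond_eq_cond_of_singleton_eq_mul (by simp [Real.exp_pos]) ENNReal.ofReal_ne_top
    fun a ⟨hi, hj⟩ => agentWeight_singleton_eq_mul hg (htop a) hi hj ?_
  refine hX_down (σ a) (hσ ▸ Set.mem_range_self a) _ (Finset.insert_nonempty _ _) ?_
  simp only [Finset.insert_subset_iff, Finset.singleton_subset_iff]
  exact ⟨hi, hj, htop a |>.1⟩


lemma mem_iff_forall_agent_iInter_pos (hσ : Set.range σ = X)
    (hX_down : ∀ s ∈ X, ∀ t : Finset I, t.Nonempty → t ⊆ s → t ∈ X) {J : Finset I}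
    (hJ : J.Nonempty) : J ∈ X ↔ ∀ j ∈ J, 0 < agent g σ top j (⋂ k ∈ J, vertexStar σ k) := by
  constructor
  · intro hJX j hj
    rw [← hσ] at hJX
    obtain ⟨a, rfl⟩ := hJX
    have ha : a ∈ ⋂ k ∈ σ a, vertexStar σ k := Set.mem_iInter₂.2 fun k hk => hk
    exact (agent_singleton_pos hj).trans_le (measure_mono (Set.singleton_subset_iff.2 ha))
  · intro h
    obtain ⟨j, hj⟩ := hJ
    obtain ⟨a, ha⟩ := nonempty_of_measure_ne_zero (h j hj).ne'
    exact hX_down (σ a) (hσ ▸ Set.mem_range_self a) J ⟨j, hj⟩ fun k hk => Set.mem_iInter₂.1 ha k hk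

lemma isOneCoboundary_of_cond_eq_agent (hσ : Set.range σ = X)
    (htop : ∀ a, IsGreatest (σ a : Set I) (top a)) (Q : Measure A) [IsFiniteMeasure Q]
    (hQ : ∀ i, 0 < Q (vertexStar σ i) ∧ Q[|vertexStar σ i] = agent g σ top i) :
    IsOneCoboundary X g := by
  set c : I → ENNReal := fun i => Q (vertexStar σ i) * (agentWeight g top i (vertexStar σ i))⁻¹
  have hQ_singleton : ∀ i, ∀ a ∈ vertexStar σ i,
      Q {a} = c i * ENNReal.ofReal (Real.exp (antisymmExt g i (top a))) := fun i a ha => by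
    rw [measure_singleton_eq_of_cond_eq Q (hQ i).2 ha, agentWeight_singleton]
  have hc_pos : ∀ i, 0 < (c i).toReal := fun i => by
    have hne : (vertexStar σ i).Nonempty := nonempty_of_measure_ne_zero (hQ i).1.ne'
    exact ENNReal.toReal_pos
      (mul_ne_zero (hQ i).1.ne' (ENNReal.inv_ne_zero.2 (measure_ne_top _ _)))
      (ENNReal.mul_ne_top (measure_ne_top _ _)
        (ENNReal.inv_ne_top.2 (agentWeight_vertexStar_ne_zero hne)))
  refine isOneCoboundary_of_eq_mul_exp (fun i => (c i).toReal) hc_pos fun i j hij hX => ?_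
  rw [← hσ] at hX
  obtain ⟨a, ha⟩ := hX
  have hi : a ∈ vertexStar σ i := by simp [vertexStar, ha]
  have hj : a ∈ vertexStar σ j := by simp [vertexStar, ha]
  have htop_a : top a = j :=
    (htop a).unique ⟨hj, by simp [ha, upperBounds, hij.le]⟩
  have h := (hQ_singleton j a hj).symm.trans (hQ_singleton i a hi)
  rw [htop_a, antisymmExt_self, antisymmExt_of_lt hij] at h
  simpa [ENNReal.toReal_mul, (Real.exp_pos _).le] using congrArg ENNReal.toReal h

end Agents

theorem nonvanishing_H1_counterexample_general {I : Type*} [Fintype I] [LinearOrder I]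
    (X : Set (Finset I))
    (hX_nonempty : ∀ s ∈ X, s.Nonempty)
    (hX_down : ∀ s ∈ X, ∀ t : Finset I, t.Nonempty → t ⊆ s → t ∈ X)
    (hX_vertices : ∀ i : I, ({i} : Finset I) ∈ X)
    -- `H¹(X, ℝ) ≠ 0`: some 1-cocycle on `X` is not a coboundary
    (hH1 : ∃ g : I → I → ℝ,
      (∀ i j k : I, i < j → j < k → ({i, j, k} : Finset I) ∈ X →
        g j k - g i k + g i j = 0) ∧
      ¬ ∃ f : I → ℝ, ∀ i j : I, i < j → ({i, j} : Finset I) ∈ X → g i j = f j - f i) :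
    ∃ (A : Type) (_ : MeasurableSpace A) (_ : Fintype A)
      (As : I → Set A) (P : I → Measure A),
      (∀ i, MeasurableSet (As i)) ∧
      (∀ i, IsProbabilityMeasure (P i)) ∧
      (∀ i, P i (As i) = 1) ∧
      -- pairwise compatible
      (∀ i j : I, 0 < P i (As i ∩ As j) → 0 < P j (As i ∩ As j) →
        (P i)[|As i ∩ As j] = (P j)[|As i ∩ As j]) ∧
      -- overlap simplicial complex is exactly `X`
      (∀ J : Finset I, J.Nonempty →
        (J ∈ X ↔ ∀ j ∈ J, 0 < P j (⋂ k ∈ J, As k))) ∧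
      -- no ur-prior
      ¬ ∃ Q : Measure A, IsProbabilityMeasure Q ∧ Q (⋃ i, As i)ᶜ = 0 ∧
          ∀ i, 0 < Q (As i) ∧ Q[|As i] = P i := by
  obtain ⟨g, hg, hg_not⟩ := hH1
  -- `X` lives in a universe above `Type`, so the simplices are enumerated by `Fin`.
  let e : Fin (Nat.card X) ≃ X := (Finite.equivFin X).symm
  let σ : Fin (Nat.card X) → Finset I := fun a => e a
  let top : Fin (Nat.card X) → I := fun a => (σ a).max' (hX_nonempty _ (e a).2)
  have hσ : Set.range σ = X := by
    rw [show σ = Subtype.val ∘ e from rfl, Set.range_comp, e.range_eq_univ, Set.image_univ,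
      Subtype.range_coe]
  have htop : ∀ a, IsGreatest (σ a : Set I) (top a) := fun a => Finset.isGreatest_max' _ _
  have hstar : ∀ i, (vertexStar σ i).Nonempty := fun i => by
    obtain ⟨a, ha⟩ : {i} ∈ Set.range σ := hσ.symm ▸ hX_vertices i
    exact ⟨a, show i ∈ σ a from ha ▸ Finset.mem_singleton_self i⟩
  refine ⟨Fin (Nat.card X), inferInstance, inferInstance, vertexStar σ, agent g σ top,
    fun i => (Set.toFinite _).measurableSet, fun i => agent_isProbabilityMeasure (hstar i),
    fun i => agent_vertexStar (hstar i),
    fun i j _ _ => agent_cond_inter_eq hσ hX_down hg htop i j,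
    fun J hJ => mem_iff_forall_agent_iInter_pos hσ hX_down hJ, ?_⟩
  rintro ⟨Q, _, -, hQ⟩
  exact hg_not (isOneCoboundary_of_cond_eq_agent hσ htop Q hQ)

/-- Main theorem, part 2: if the first real cohomology of a finite simplicial complex `X`
on vertex set `I` is nonzero (there is a 1-cocycle that is not a coboundary), then there
exist a finite measurable space `A`, measurable subsets `A_i`, and probability measures
`P_i` on the `A_i`, which are pairwise compatible, whose overlap simplicial complex is
exactly `X`, but which admit no ur-prior. -/
theorem nonvanishing_H1_counterexample {I : Type*} [Fintype I] [Nonempty I] [LinearOrder I]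
    (X : Set (Finset I))
    (hX_nonempty : ∀ s ∈ X, s.Nonempty)
    (hX_down : ∀ s ∈ X, ∀ t : Finset I, t.Nonempty → t ⊆ s → t ∈ X)
    (hX_vertices : ∀ i : I, ({i} : Finset I) ∈ X)
    -- `H¹(X, ℝ) ≠ 0`: some 1-cocycle on `X` is not a coboundary
    (hH1 : ∃ g : I → I → ℝ,
      (∀ i j k : I, i < j → j < k → ({i, j, k} : Finset I) ∈ X →
        g j k - g i k + g i j = 0) ∧
      ¬ ∃ f : I → ℝ, ∀ i j : I, i < j → ({i, j} : Finset I) ∈ X → g i j = f j - f i) :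
    ∃ (A : Type) (_ : MeasurableSpace A) (_ : Fintype A)
      (As : I → Set A) (P : I → Measure A),
      (∀ i, MeasurableSet (As i)) ∧
      (∀ i, IsProbabilityMeasure (P i)) ∧
      (∀ i, P i (As i) = 1) ∧
      -- pairwise compatible
      (∀ i j : I, 0 < P i (As i ∩ As j) → 0 < P j (As i ∩ As j) →
        (P i)[|As i ∩ As j] = (P j)[|As i ∩ As j]) ∧
      -- overlap simplicial complex is exactly `X`
      (∀ J : Finset I, J.Nonempty →
        (J ∈ X ↔ ∀ j ∈ J, 0 < P j (⋂ k ∈ J, As k))) ∧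
      -- no ur-prior
      ¬ ∃ Q : Measure A, IsProbabilityMeasure Q ∧ Q (⋃ i, As i)ᶜ = 0 ∧
          ∀ i, 0 < Q (As i) ∧ Q[|As i] = P i :=
  nonvanishing_H1_counterexample_general X hX_nonempty hX_down hX_vertices hH1
end

section
/- In the counterexample construction: let X be a finite simplicial complex on a linearly ordered finite vertex set I, let f be a 1-cocycle on X, and define for each i ∈ I a measure μ_i on A_i = {x ∈ X : i ∈ x} by μ_i({x}) = exp(f(i, k_0)) where k_0 = max(x) (interpreting f(i,i)=0). Then for every i, j with {i,j} ∈ X and every x ∈ A_i ∩ A_j, one has μ_i({x})/μ_j({x}) = exp(f(i,j)), where f(i,j) is interpreted with the sign convention f(i,j) = −f(j,i). -/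
open Finset

/-!
Antisymmetry makes the cocycle relation `f a b + f b c = f a c` invariant under permuting
`a, b, c`, so the relation, assumed only for increasing triangles, holds for any three vertices
of a common simplex. Applied to `i`, `j` and `max x` it gives
`f i (max x) - f j (max x) = f i j`, and exponentiating yields the ratio.
-/

theorem insert_insert_singleton_mem_of_downClosed {I : Type*} [DecidableEq I]
    {X : Set (Finset I)} (hX_down : ∀ s ∈ X, ∀ t : Finset I, t.Nonempty → t ⊆ s → t ∈ X)
    {x : Finset I} (hx : x ∈ X) {a b c : I} (ha : a ∈ x) (hb : b ∈ x) (hc : c ∈ x) :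
    ({a, b, c} : Finset I) ∈ X :=
  hX_down x hx _ (insert_nonempty _ _) <| by
    simp only [insert_subset_iff, singleton_subset_iff]
    exact ⟨ha, hb, hc⟩

section Cocycle

variable {I : Type*} [LinearOrder I] {X : Set (Finset I)} {f : I → I → ℝ}

theorem cocycle_of_le_of_le (hf_anti : ∀ i j : I, f j i = -f i j)
    (hf_cocycle : ∀ i j k : I, i < j → j < k → ({i, j, k} : Finset I) ∈ X →
      f j k - f i k + f i j = 0)
    {a b c : I} (hab : a ≤ b) (hbc : b ≤ c) (h : ({a, b, c} : Finset I) ∈ X) :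
    f a b + f b c = f a c := by
  have hf_diag : ∀ i, f i i = 0 := fun i => by linarith [hf_anti i i]
  rcases hab.lt_or_eq with hab | rfl
  · rcases hbc.lt_or_eq with hbc | rfl
    · linarith [hf_cocycle a b c hab hbc h]
    · rw [hf_diag, add_zero]
  · rw [hf_diag, zero_add]

theorem cocycle_of_mem_simplex
    (hX_down : ∀ s ∈ X, ∀ t : Finset I, t.Nonempty → t ⊆ s → t ∈ X)
    (hf_anti : ∀ i j : I, f j i = -f i j)
    (hf_cocycle : ∀ i j k : I, i < j → j < k → ({i, j, k} : Finset I) ∈ X →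
      f j k - f i k + f i j = 0)
    {x : Finset I} (hx : x ∈ X) {a b c : I} (ha : a ∈ x) (hb : b ∈ x) (hc : c ∈ x) :
    f a b + f b c = f a c := by
  wlog hab : a ≤ b generalizing a b c
  · linarith [this hb ha hc (le_of_not_ge hab), hf_anti a b]
  wlog hbc : b ≤ c generalizing a b c
  · rcases le_total a c with hac | hca
    · linarith [this ha hc hb hac (le_of_not_ge hbc), hf_anti b c]
    · linarith [this hc ha hb hca hab, hf_anti a c, hf_anti b c]
  exact cocycle_of_le_of_le hf_anti hf_cocycle hab hbc
    (insert_insert_singleton_mem_of_downClosed hX_down hx ha hb hc)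

end Cocycle

theorem construction_ratio_general {I : Type*} [LinearOrder I]
    (X : Set (Finset I))
    (hX_down : ∀ s ∈ X, ∀ t : Finset I, t.Nonempty → t ⊆ s → t ∈ X)
    (f : I → I → ℝ)
    (hf_anti : ∀ i j : I, f j i = -f i j)
    (hf_cocycle : ∀ i j k : I, i < j → j < k → ({i, j, k} : Finset I) ∈ X →
      f j k - f i k + f i j = 0) :
    ∀ (i j : I) (x : Finset I) (hx : x ∈ X) (hi : i ∈ x) (hj : j ∈ x),
      ({i, j} : Finset I) ∈ X →
      Real.exp (f i (x.max' ⟨i, hi⟩)) / Real.exp (f j (x.max' ⟨i, hi⟩))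
        = Real.exp (f i j) := by
  intro i j x hx hi hj _
  rw [← Real.exp_sub, Real.exp_eq_exp]
  linarith [cocycle_of_mem_simplex hX_down hf_anti hf_cocycle hx hi hj (x.max'_mem ⟨i, hi⟩)]

/-- Counterexample construction: if `f` is an antisymmetric 1-cocycle on a finite
simplicial complex `X` and `μ_i({x}) = exp(f(i, max x))` for each simplex `x ∈ X`
containing `i`, then for every edge `{i,j} ∈ X` and every simplex `x` containing both
`i` and `j`, the ratio `μ_i({x}) / μ_j({x})` equals `exp(f(i,j))`. -/
theorem construction_ratio {I : Type*} [Fintype I] [LinearOrder I]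
    (X : Set (Finset I))
    (hX_nonempty : ∀ s ∈ X, s.Nonempty)
    (hX_down : ∀ s ∈ X, ∀ t : Finset I, t.Nonempty → t ⊆ s → t ∈ X)
    (f : I → I → ℝ)
    (hf_refl : ∀ i : I, f i i = 0)
    (hf_anti : ∀ i j : I, f j i = -f i j)
    (hf_cocycle : ∀ i j k : I, i < j → j < k → ({i, j, k} : Finset I) ∈ X →
      f j k - f i k + f i j = 0) :
    ∀ (i j : I) (x : Finset I) (hx : x ∈ X) (hi : i ∈ x) (hj : j ∈ x),
      ({i, j} : Finset I) ∈ X →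
      Real.exp (f i (x.max' ⟨i, hi⟩)) / Real.exp (f j (x.max' ⟨i, hi⟩))
        = Real.exp (f i j) :=
  construction_ratio_general X hX_down f hf_anti hf_cocycle
end

section
/- Let A = {platinum, aluminum, bismuth, iron, copper, gold}, A_1 = {platinum, aluminum, iron}, A_2 = {bismuth, iron, copper}, A_3 = {gold, platinum, bismuth}, with P_1 = (0.2, 0.5, 0.3) on (platinum, aluminum, iron), P_2 = (0.3, 0.2, 0.5) on (bismuth, iron, copper), P_3 = (0.5, 0.3, 0.2) on (gold, platinum, bismuth). Then P_1, P_2, P_3 are pairwise compatible, but there is no probability measure P on A_1 ∪ A_2 ∪ A_3 with P(A_i) > 0 and P|_{A_i} = P_i for i = 1, 2, 3. -/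
/-!
Every pairwise intersection `A_i ∩ A_j` is a single point, and conditioning a finite measure on a
point of positive mass always gives the Dirac measure there, so compatibility is automatic.
An ur-prior `Q` would satisfy `Q(A_i ∩ s) = P_i(s) Q(A_i)`, so within each `A_i` it orders the
points as `P_i` does; this forces `Q{platinum} < Q{iron} < Q{bismuth} < Q{platinum}`.
-/

open MeasureTheory ProbabilityTheory
open scoped ENNReal

section
variable {α : Type*} [MeasurableSpace α]

theorem cond_singleton_eq_dirac [MeasurableSingletonClass α] (μ : Measure α) {x : α}
    (h0 : μ {x} ≠ 0) (htop : μ {x} ≠ ∞) : μ[|{x}] = Measure.dirac x := by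
  ext s hs
  rw [cond_apply (measurableSet_singleton x), Measure.dirac_apply' _ hs]
  by_cases hx : x ∈ s
  · rw [Set.inter_eq_left.mpr (Set.singleton_subset_iff.mpr hx), Set.indicator_of_mem hx,
      ENNReal.inv_mul_cancel h0 htop, Pi.one_apply]
  · rw [Set.singleton_inter_eq_empty.mpr hx, Set.indicator_of_notMem hx, measure_empty, mul_zero]

theorem cond_eq_of_subsingleton [MeasurableSingletonClass α] (μ ν : Measure α)
    [IsFiniteMeasure μ] [IsFiniteMeasure ν] {s : Set α} (hs : s.Subsingleton)
    (hμ : μ s ≠ 0) (hν : ν s ≠ 0) : μ[|s] = ν[|s] := by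
  obtain ⟨x, rfl⟩ := hs.eq_empty_or_singleton.resolve_left fun h => hμ (h ▸ measure_empty)
  rw [cond_singleton_eq_dirac μ hμ (measure_ne_top μ _),
    cond_singleton_eq_dirac ν hν (measure_ne_top ν _)]

theorem measure_singleton_lt_of_cond_eq {Q P : Measure α} [IsFiniteMeasure Q] {A : Set α}
    (hA : MeasurableSet A) (hQA : Q A ≠ 0) (hcond : Q[|A] = P) {x y : α} (hx : x ∈ A)
    (hy : y ∈ A) (hxy : P {x} < P {y}) : Q {x} < Q {y} := by
  rw [← Set.inter_eq_right.mpr (Set.singleton_subset_iff.mpr hx),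
    ← Set.inter_eq_right.mpr (Set.singleton_subset_iff.mpr hy),
    ← cond_mul_eq_inter hA, ← cond_mul_eq_inter hA, hcond]
  exact ENNReal.mul_lt_mul_left hQA (measure_ne_top Q A) hxy

end

/-- The three-agent metals example with no common event (Example 4 of the paper):
with possibilities platinum = 0, aluminum = 1, bismuth = 2, iron = 3, copper = 4,
gold = 5, and the credences `P₁ = (0.2, 0.5, 0.3)` on `{platinum, aluminum, iron}`,
`P₂ = (0.3, 0.2, 0.5)` on `{bismuth, iron, copper}`, `P₃ = (0.5, 0.3, 0.2)` on
`{gold, platinum, bismuth}`, the agents are pairwise compatible but have no ur-prior. -/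
theorem hollow_triangle_no_urprior
    (As : Fin 3 → Set (Fin 6))
    (hA1 : As 0 = {0, 1, 3}) (hA2 : As 1 = {2, 3, 4}) (hA3 : As 2 = {5, 0, 2})
    (P : Fin 3 → Measure (Fin 6))
    (hP1 : P 0 = (2/10 : ℝ≥0∞) • Measure.dirac 0 + (5/10 : ℝ≥0∞) • Measure.dirac 1
      + (3/10 : ℝ≥0∞) • Measure.dirac 3)
    (hP2 : P 1 = (3/10 : ℝ≥0∞) • Measure.dirac 2 + (2/10 : ℝ≥0∞) • Measure.dirac 3
      + (5/10 : ℝ≥0∞) • Measure.dirac 4)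
    (hP3 : P 2 = (5/10 : ℝ≥0∞) • Measure.dirac 5 + (3/10 : ℝ≥0∞) • Measure.dirac 0
      + (2/10 : ℝ≥0∞) • Measure.dirac 2) :
    -- pairwise compatible
    (∀ i j : Fin 3, 0 < P i (As i ∩ As j) → 0 < P j (As i ∩ As j) →
      (P i)[|As i ∩ As j] = (P j)[|As i ∩ As j]) ∧
    -- but no ur-prior
    ¬ ∃ Q : Measure (Fin 6), IsProbabilityMeasure Q ∧ Q (⋃ i, As i)ᶜ = 0 ∧
        ∀ i, 0 < Q (As i) ∧ Q[|As i] = P i := by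
  refine ⟨fun i j hi hj => ?_, ?_⟩
  · obtain rfl | hij := eq_or_ne i j
    · rfl
    have hsub : (As i ∩ As j).Subsingleton := by
      intro x hx y hy
      fin_cases i <;> fin_cases j <;> simp_all <;> omega
    have hfin : ∀ k, IsFiniteMeasure (P k) := by
      intro k
      fin_cases k <;> constructor <;> simp [hP1, hP2, hP3, lt_top_iff_ne_top, ENNReal.div_eq_top]
    exact cond_eq_of_subsingleton _ _ hsub hi.ne' hj.ne'
  · rintro ⟨Q, hQ, -, hcond⟩
    have hmono : ∀ i x y, x ∈ As i → y ∈ As i → P i {x} < P i {y} → Q {x} < Q {y} :=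
      fun i _ _ => measure_singleton_lt_of_cond_eq .of_discrete (hcond i).1.ne' (hcond i).2
    have h23 : (2/10 : ℝ≥0∞) < 3/10 :=
      ENNReal.div_lt_div_right (by norm_num) (by norm_num) (by norm_num)
    refine lt_irrefl (Q {0}) ?_
    calc Q {0} < Q {3} := hmono 0 0 3 (by simp [hA1]) (by simp [hA1]) (by simpa [hP1] using h23)
      _ < Q {2} := hmono 1 3 2 (by simp [hA2]) (by simp [hA2]) (by simpa [hP2] using h23)
      _ < Q {0} := hmono 2 2 0 (by simp [hA3]) (by simp [hA3]) (by simpa [hP3] using h23)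
end

section
/- With A_1 = {platinum, aluminum, iron}, A_2 = {bismuth, iron, copper}, A_3 = {gold, platinum, bismuth}, A_4 = {platinum, iron, bismuth}, and P_1 = (0.2, 0.5, 0.3), P_2 = (0.3, 0.2, 0.5), P_3 = (0.5, 0.3, 0.2) as in the three-agent example: there is no probability mass function P_4 on A_4 such that P_4 is pairwise compatible with each of P_1, P_2, P_3. Concretely, there are no α, β ≥ 0 with α + β ≤ 1 satisfying α/(α+β) = 2/5, β/(1−α) = 2/5, and (1−α−β)/(1−β) = 2/5 simultaneously. -/
/-!
Conditioning on a two-point set `{x, y}` where the other agent has positive mass, compatibility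
says exactly that the odds `P₄{x} : P₄{y}` equal those of the other agent. Writing `a, b, c` for the
masses of platinum, iron and bismuth, the three agents impose `a : b = b : c = c : a = 2 : 3`;
going once around the cycle gives `a = (2/3)³ a`, so `a = b = c = 0`, contradicting
`a + b + c = 1`. The real system in the second claim is the same one with
`(a, b, c) = (α, β, 1 - α - β)`.
-/

open MeasureTheory ProbabilityTheory
open scoped ENNReal

/-- Cross-multiplied, compatibility also holds when `μ s = 0`, so no case split on the
positivity of `μ` is needed afterwards. -/
theorem measureReal_inter_mul_eq_of_cond_eq {Ω : Type*} [MeasurableSpace Ω] {μ ν : Measure Ω}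
    [IsFiniteMeasure μ] {s : Set Ω} (hs : MeasurableSet s) (hν : 0 < ν s) (hν_fin : ν s ≠ ∞)
    (h : 0 < μ s → 0 < ν s → μ[|s] = ν[|s]) (t : Set Ω) :
    μ.real (s ∩ t) * ν.real s = ν.real (s ∩ t) * μ.real s := by
  rcases eq_or_ne (μ s) 0 with hμ | hμ
  · simp [measureReal_def, hμ, measure_mono_null Set.inter_subset_left hμ]
  have hcond := congrArg (fun m : Measure Ω ↦ (m t).toReal) (h hμ.bot_lt hν)
  simp only [cond_apply hs, ENNReal.toReal_mul, ENNReal.toReal_inv, ← measureReal_def] at hcond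
  have hμ_real : μ.real s ≠ 0 := (ENNReal.toReal_pos hμ (by finiteness)).ne'
  have hν_real : ν.real s ≠ 0 := (ENNReal.toReal_pos hν.ne' hν_fin).ne'
  field_simp at hcond
  linarith

theorem measureReal_singleton_mul_eq_of_cond_eq_pair {Ω : Type*} [MeasurableSpace Ω]
    [MeasurableSingletonClass Ω] {μ ν : Measure Ω} [IsFiniteMeasure μ] {x y : Ω} (hxy : x ≠ y)
    (hν : 0 < ν {x, y}) (hν_fin : ν {x, y} ≠ ∞)
    (h : 0 < μ {x, y} → 0 < ν {x, y} → μ[|{x, y}] = ν[|{x, y}]) :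
    μ.real {x} * ν.real {y} = ν.real {x} * μ.real {y} := by
  have hpair (m : Measure Ω) (hm : m {x, y} ≠ ∞) : m.real {x, y} = m.real {x} + m.real {y} :=
    measureReal_union (Set.disjoint_singleton.2 hxy) (.singleton y)
      (measure_ne_top_of_subset (Set.singleton_subset_iff.2 (Set.mem_insert x {y})) hm)
      (measure_ne_top_of_subset (Set.subset_insert x {y}) hm)
  have key := measureReal_inter_mul_eq_of_cond_eq (.insert (.singleton y) x) hν hν_fin h {x}
  rw [Set.inter_eq_right.2 (Set.singleton_subset_iff.2 (Set.mem_insert x {y})),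
    hpair μ (by finiteness), hpair ν hν_fin] at key
  linarith

theorem eq_mul_of_div_eq_of_ne_zero {G₀ : Type*} [GroupWithZero G₀] {x y r : G₀}
    (h : x / y = r) (hr : r ≠ 0) : x = r * y :=
  (div_eq_iff (div_ne_zero_iff.1 (h ▸ hr)).2).1 h

theorem sum_measureReal_singleton_eq_one {Ω : Type*} [MeasurableSpace Ω]
    [MeasurableSingletonClass Ω] {μ : Measure Ω} [IsProbabilityMeasure μ] (s : Finset Ω)
    (hs : μ (↑s)ᶜ = 0) : ∑ x ∈ s, μ.real {x} = 1 := by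
  rw [sum_measureReal_singleton, measureReal_def,
    (prob_compl_eq_zero_iff s.measurableSet).1 hs, ENNReal.toReal_one]

/-- No fourth agent on `A₄ = {platinum, iron, bismuth}` can be pairwise compatible with
the three agents of the hollow-triangle example.  With platinum = 0, aluminum = 1,
bismuth = 2, iron = 3, copper = 4, gold = 5: there is no probability measure `P₄`
concentrated on `A₄` pairwise compatible with each of `P₁, P₂, P₃`; concretely, there are
no `α, β ≥ 0` with `α + β ≤ 1` satisfying `α/(α+β) = 2/5`, `β/(1−α) = 2/5` and
`(1−α−β)/(1−β) = 2/5` simultaneously. -/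
theorem no_compatible_fourth_agent
    (A1 A2 A3 A4 : Set (Fin 6))
    (hA1 : A1 = {0, 1, 3}) (hA2 : A2 = {2, 3, 4}) (hA3 : A3 = {5, 0, 2})
    (hA4 : A4 = {0, 3, 2})
    (P1 P2 P3 : Measure (Fin 6))
    (hP1 : P1 = (2/10 : ℝ≥0∞) • Measure.dirac 0 + (5/10 : ℝ≥0∞) • Measure.dirac 1
      + (3/10 : ℝ≥0∞) • Measure.dirac 3)
    (hP2 : P2 = (3/10 : ℝ≥0∞) • Measure.dirac 2 + (2/10 : ℝ≥0∞) • Measure.dirac 3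
      + (5/10 : ℝ≥0∞) • Measure.dirac 4)
    (hP3 : P3 = (5/10 : ℝ≥0∞) • Measure.dirac 5 + (3/10 : ℝ≥0∞) • Measure.dirac 0
      + (2/10 : ℝ≥0∞) • Measure.dirac 2) :
    (¬ ∃ P4 : Measure (Fin 6), IsProbabilityMeasure P4 ∧ P4 A4ᶜ = 0 ∧
      (0 < P4 (A4 ∩ A1) → 0 < P1 (A4 ∩ A1) → P4[|A4 ∩ A1] = P1[|A4 ∩ A1]) ∧
      (0 < P4 (A4 ∩ A2) → 0 < P2 (A4 ∩ A2) → P4[|A4 ∩ A2] = P2[|A4 ∩ A2]) ∧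
      (0 < P4 (A4 ∩ A3) → 0 < P3 (A4 ∩ A3) → P4[|A4 ∩ A3] = P3[|A4 ∩ A3])) ∧
    ¬ ∃ α β : ℝ, 0 ≤ α ∧ 0 ≤ β ∧ α + β ≤ 1 ∧
      α / (α + β) = 2/5 ∧ β / (1 - α) = 2/5 ∧ (1 - α - β) / (1 - β) = 2/5 := by
  subst hA1 hA2 hA3 hA4 hP1 hP2 hP3
  constructor
  · rintro ⟨P4, _, hnull, h1, h2, h3⟩
    have e1 : ({0, 3, 2} ∩ {0, 1, 3} : Set (Fin 6)) = {0, 3} := by ext x; fin_cases x <;> simp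
    have e2 : ({0, 3, 2} ∩ {2, 3, 4} : Set (Fin 6)) = {3, 2} := by ext x; fin_cases x <;> simp
    have e3 : ({0, 3, 2} ∩ {5, 0, 2} : Set (Fin 6)) = {0, 2} := by ext x; fin_cases x <;> simp
    rw [e1] at h1; rw [e2] at h2; rw [e3] at h3
    have odds1 : P4.real {0} * (3 / 10) = 2 / 10 * P4.real {3} := by
      simpa [measureReal_def] using measureReal_singleton_mul_eq_of_cond_eq_pair
        (by decide) (by simp) (by simp [ENNReal.div_eq_top]) h1
    have odds2 : P4.real {3} * (3 / 10) = 2 / 10 * P4.real {2} := by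
      simpa [measureReal_def] using measureReal_singleton_mul_eq_of_cond_eq_pair
        (by decide) (by simp) (by simp [ENNReal.div_eq_top]) h2
    have odds3 : P4.real {0} * (2 / 10) = 3 / 10 * P4.real {2} := by
      simpa [measureReal_def] using measureReal_singleton_mul_eq_of_cond_eq_pair
        (by decide) (by simp) (by simp [ENNReal.div_eq_top]) h3
    have hsum : P4.real {0} + P4.real {3} + P4.real {2} = 1 := by
      simpa [add_assoc] using sum_measureReal_singleton_eq_one (μ := P4) {0, 3, 2}
        (by push_cast; exact hnull)
    linarith
  · rintro ⟨α, β, -, -, -, h1, h2, h3⟩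
    have h25 : (2 / 5 : ℝ) ≠ 0 := by norm_num
    linarith [eq_mul_of_div_eq_of_ne_zero h1 h25, eq_mul_of_div_eq_of_ne_zero h2 h25,
      eq_mul_of_div_eq_of_ne_zero h3 h25]
end

section
/- Let I be a finite set of agents with pairwise compatible credence functions P_i on finite subsets A_i of a finite set A, and suppose there exists a point a ∈ ⋂_{i∈I} A_i with P_i({a}) > 0 for all i ∈ I. Then the agents have an ur-prior: there is a probability measure P on ⋃_i A_i with P(A_i) > 0 and P|_{A_i} = P_i for all i. (One can take P proportional to the glued measure obtained by rescaling each P_i so that the mass at a equals 1.) -/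
open MeasureTheory ProbabilityTheory

/-! Rescale each `P i` so that its mass at the common point `a` is `1`. Compatibility on
`A_i ∩ A_j`, which contains `a`, then says exactly that the rescaled measures agree there, so
they glue to one measure `μ` on `⋃ i, A_i` with `μ[|A_i] = P i`; conditioning `μ` on the union
gives the ur-prior. -/

namespace MeasureTheory

lemma measure_iUnion_ne_top_of_finite {ι α : Type*} [MeasurableSpace α] [Finite α]
    {μ : Measure α} {S : ι → Set α} (h : ∀ i, μ (S i) ≠ ⊤) : μ (⋃ i, S i) ≠ ⊤ := by
  have hpoint : ∀ x ∈ ⋃ i, S i, μ {x} < ⊤ := fun x hx =>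
    let ⟨i, hi⟩ := Set.mem_iUnion.1 hx
    (measure_mono (Set.singleton_subset_iff.2 hi)).trans_lt (h i).lt_top
  simpa only [Set.biUnion_of_singleton] using (measure_biUnion_lt_top (Set.toFinite _) hpoint).ne

namespace Measure

theorem exists_restrict_eq_of_restrict_inter_eq {ι α : Type*} [MeasurableSpace α] [Countable α]
    [MeasurableSingletonClass α] (ν : ι → Measure α) (S : ι → Set α)
    (hsupp : ∀ i, ν i (S i)ᶜ = 0)
    (hcompat : ∀ i j, (ν i).restrict (S i ∩ S j) = (ν j).restrict (S i ∩ S j)) :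
    ∃ μ : Measure α, ∀ i, μ.restrict (S i) = ν i := by
  classical
  have hagree : ∀ i j x, x ∈ S i → x ∈ S j → ν i {x} = ν j {x} := fun i j x hi hj => by
    simpa [restrict_apply (measurableSet_singleton x),
      Set.singleton_inter_of_mem (show x ∈ S i ∩ S j from ⟨hi, hj⟩)]
      using congrArg (· {x}) (hcompat i j)
  let w : α → ENNReal := fun x => if h : ∃ i, x ∈ S i then ν h.choose {x} else 0
  refine ⟨sum fun x => w x • dirac x, fun i => ext_of_singleton fun x => ?_⟩
  rw [restrict_apply (measurableSet_singleton x)]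
  by_cases hx : x ∈ S i
  · have hex : ∃ j, x ∈ S j := ⟨i, hx⟩
    rw [Set.singleton_inter_of_mem hx, sum_smul_dirac_singleton]
    simp only [w, dif_pos hex]
    exact hagree _ _ x hex.choose_spec hx
  · rw [Set.singleton_inter_eq_empty.2 hx, measure_empty]
    exact (measure_mono_null (Set.singleton_subset_iff.2 hx) (hsupp i)).symm

variable {α : Type*} [MeasurableSpace α]

noncomputable def normalizeAt (μ : Measure α) (a : α) : Measure α :=
  (μ {a})⁻¹ • μ

lemma normalizeAt_smul (μ : Measure α) (a : α) {c : ENNReal} (hc₀ : c ≠ 0) (hc : c ≠ ⊤) :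
    normalizeAt (c • μ) a = normalizeAt μ a := by
  simp only [normalizeAt, smul_apply, smul_eq_mul, smul_smul]
  rw [ENNReal.mul_inv (Or.inl hc₀) (Or.inl hc), mul_comm c⁻¹, mul_assoc,
    ENNReal.inv_mul_cancel hc₀ hc, mul_one]

lemma normalizeAt_restrict [MeasurableSingletonClass α] (μ : Measure α) {a : α} {E : Set α}
    (ha : a ∈ E) : normalizeAt (μ.restrict E) a = (normalizeAt μ a).restrict E := by
  rw [normalizeAt, normalizeAt, restrict_smul, restrict_apply (measurableSet_singleton a),
    Set.singleton_inter_of_mem ha]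

lemma restrict_eq_measure_smul_cond (μ : Measure α) {E : Set α} (h₀ : μ E ≠ 0) (h : μ E ≠ ⊤) :
    μ.restrict E = μ E • μ[|E] := by
  rw [ProbabilityTheory.cond, smul_smul, ENNReal.mul_inv_cancel h₀ h, one_smul]

lemma normalizeAt_restrict_eq_of_cond_eq [MeasurableSingletonClass α] {μ ν : Measure α}
    [IsFiniteMeasure μ] [IsFiniteMeasure ν] {a : α} {E : Set α} (ha : a ∈ E)
    (hμ : μ E ≠ 0) (hν : ν E ≠ 0) (h : μ[|E] = ν[|E]) :
    (normalizeAt μ a).restrict E = (normalizeAt ν a).restrict E := by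
  rw [← normalizeAt_restrict μ ha, ← normalizeAt_restrict ν ha,
    restrict_eq_measure_smul_cond μ hμ (measure_ne_top μ E),
    restrict_eq_measure_smul_cond ν hν (measure_ne_top ν E),
    normalizeAt_smul _ _ hμ (measure_ne_top μ E), normalizeAt_smul _ _ hν (measure_ne_top ν E), h]

end Measure

end MeasureTheory

namespace ProbabilityTheory

variable {α : Type*} [MeasurableSpace α] {μ : Measure α} {s : Set α}

lemma measure_ne_zero_and_ne_top_of_cond_ne_zero (h : μ[|s] ≠ 0) : μ s ≠ 0 ∧ μ s ≠ ⊤ := by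
  simpa [cond_eq_zero, not_or, and_comm] using h

lemma cond_eq_of_restrict_eq_smul {P : Measure α} [IsProbabilityMeasure P] {c : ENNReal}
    (hc₀ : c ≠ 0) (hc : c ≠ ⊤) (h : μ.restrict s = c • P) : μ[|s] = P := by
  have hs : μ s = c := by
    rw [← Measure.restrict_apply_univ, h, Measure.smul_apply, measure_univ, smul_eq_mul, mul_one]
  rw [cond, h, hs, smul_smul, ENNReal.inv_mul_cancel hc₀ hc, one_smul]

lemma cond_cond_of_subset {t : Set α} (hs : MeasurableSet s) (ht : MeasurableSet t) (hst : t ⊆ s)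
    (hμs : μ s ≠ ⊤) : μ[|s][|t] = μ[|t] := by
  rw [cond_cond_eq_cond_inter' hs ht hμs, Set.inter_eq_right.2 hst]

end ProbabilityTheory

theorem common_point_gives_urprior_general {I A : Type*} [Nonempty I]
    [Fintype A] [MeasurableSpace A] [MeasurableSingletonClass A]
    (P : I → Measure A) [∀ i, IsProbabilityMeasure (P i)]
    (As : I → Set A)
    (hconc : ∀ i, P i (As i) = 1)
    (hcompat : ∀ i j : I, 0 < P i (As i ∩ As j) → 0 < P j (As i ∩ As j) →
      (P i)[|As i ∩ As j] = (P j)[|As i ∩ As j])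
    (a : A) (ha : a ∈ ⋂ i, As i) (hapos : ∀ i, 0 < P i {a}) :
    ∃ Q : Measure A, IsProbabilityMeasure Q ∧ Q (⋃ i, As i)ᶜ = 0 ∧
      ∀ i, 0 < Q (As i) ∧ Q[|As i] = P i := by
  have hmeas : ∀ s : Set A, MeasurableSet s := fun s => s.toFinite.measurableSet
  have haE : ∀ i, a ∈ As i := Set.mem_iInter.mp ha
  have hoverlap : ∀ k i j, 0 < P k (As i ∩ As j) := fun k i j =>
    (hapos k).trans_le (measure_mono (Set.singleton_subset_iff.2 ⟨haE i, haE j⟩))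
  obtain ⟨μ, hμ⟩ :=
    Measure.exists_restrict_eq_of_restrict_inter_eq (fun i => (P i).normalizeAt a) As
      (fun i => by simp [Measure.normalizeAt, (prob_compl_eq_zero_iff (hmeas _)).2 (hconc i)])
      (fun i j => Measure.normalizeAt_restrict_eq_of_cond_eq ⟨haE i, haE j⟩
        (hoverlap i i j).ne' (hoverlap j i j).ne' (hcompat i j (hoverlap i i j) (hoverlap j i j)))
  have hcond : ∀ i, μ[|As i] = P i := fun i =>
    cond_eq_of_restrict_eq_smul (ENNReal.inv_ne_zero.2 (measure_ne_top _ _))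
      (ENNReal.inv_ne_top.2 (hapos i).ne') (hμ i)
  have hAs : ∀ i, μ (As i) ≠ 0 ∧ μ (As i) ≠ ⊤ := fun i =>
    measure_ne_zero_and_ne_top_of_cond_ne_zero ((hcond i).symm ▸ IsProbabilityMeasure.ne_zero _)
  have hU₀ : μ (⋃ i, As i) ≠ 0 :=
    let ⟨i⟩ := ‹Nonempty I›
    ((pos_iff_ne_zero.2 (hAs i).1).trans_le (measure_mono (Set.subset_iUnion As i))).ne'
  have hU : μ (⋃ i, As i) ≠ ⊤ := measure_iUnion_ne_top_of_finite fun i => (hAs i).2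
  refine ⟨μ[|⋃ i, As i], cond_isProbabilityMeasure_of_finite hU₀ hU,
    by rw [cond_apply (hmeas _), Set.inter_compl_self, measure_empty, mul_zero], fun i => ?_⟩
  have hcondU : μ[|⋃ i, As i][|As i] = P i := by
    rw [cond_cond_of_subset (hmeas _) (hmeas _) (Set.subset_iUnion As i) hU, hcond]
  exact ⟨pos_iff_ne_zero.2 (measure_ne_zero_and_ne_top_of_cond_ne_zero
    (hcondU.symm ▸ IsProbabilityMeasure.ne_zero _)).1, hcondU⟩

/-- Biesel's theorem: pairwise compatible agents on finite subsets of a finite space who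
all assign positive probability to a common point `a` have an ur-prior. -/
theorem common_point_gives_urprior {I A : Type*} [Fintype I] [Nonempty I]
    [Fintype A] [MeasurableSpace A] [MeasurableSingletonClass A]
    (P : I → Measure A) [∀ i, IsProbabilityMeasure (P i)]
    (As : I → Set A)
    (hconc : ∀ i, P i (As i) = 1)
    (hcompat : ∀ i j : I, 0 < P i (As i ∩ As j) → 0 < P j (As i ∩ As j) →
      (P i)[|As i ∩ As j] = (P j)[|As i ∩ As j])
    (a : A) (ha : a ∈ ⋂ i, As i) (hapos : ∀ i, 0 < P i {a}) :
    ∃ Q : Measure A, IsProbabilityMeasure Q ∧ Q (⋃ i, As i)ᶜ = 0 ∧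
      ∀ i, 0 < Q (As i) ∧ Q[|As i] = P i :=
  common_point_gives_urprior_general P As hconc hcompat a ha hapos
end
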